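/- There is a partition of the set of all 265 derangements of Fin 6 into 53 subsets, each of which is a 1-factorization of L_{6,1} (for every ordered pair (i,j) with i ≠ j, exactly one permutation in the subset maps i to j), such that: 30 of the subsets each consist of one derangement of cycle type (2,4) whose 2-cycle contains the element 0 together with four 6-cycles; 16 of the subsets each consist of three derangements of cycle type (2,4) whose 2-cycle does not contain 0 together with two derangements of cycle type (3,3); 3 of the subsets each consist of four derangements of cycle type (2,4) whose 2-cycle does not contain 0 together with one derangement of cycle type (2,2,2); and 4 of the subsets each consist of two derangements of cycle type (3,3) together with three derangements of cycle type (2,2,2). -/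

import Mathlib

/-- σ has cycle type (2,4) with the distinguished element 0 in its 2-cycle. -/
def C24zero (σ : Equiv.Perm (Fin 6)) : Prop :=
  σ.cycleType = ({2, 4} : Multiset ℕ) ∧ σ (σ 0) = 0

/-- σ has cycle type (2,4) with 0 not in its 2-cycle. -/
def C24other (σ : Equiv.Perm (Fin 6)) : Prop :=
  σ.cycleType = ({2, 4} : Multiset ℕ) ∧ σ (σ 0) ≠ 0

/-- Type T1: one (2,4)-derangement with 0 in the 2-cycle and four 6-cycles. -/
def T1 (F : Finset (Equiv.Perm (Fin 6))) : Prop :=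
  (∀ σ ∈ F, C24zero σ ∨ σ.cycleType = ({6} : Multiset ℕ)) ∧
  {σ ∈ (F : Set (Equiv.Perm (Fin 6))) | C24zero σ}.ncard = 1 ∧
  {σ ∈ (F : Set (Equiv.Perm (Fin 6))) | σ.cycleType = ({6} : Multiset ℕ)}.ncard = 4

/-- Type T2: three (2,4)-derangements with 0 not in the 2-cycle and two (3,3)s. -/
def T2 (F : Finset (Equiv.Perm (Fin 6))) : Prop :=
  (∀ σ ∈ F, C24other σ ∨ σ.cycleType = ({3, 3} : Multiset ℕ)) ∧
  {σ ∈ (F : Set (Equiv.Perm (Fin 6))) | C24other σ}.ncard = 3 ∧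
  {σ ∈ (F : Set (Equiv.Perm (Fin 6))) | σ.cycleType = ({3, 3} : Multiset ℕ)}.ncard = 2

/-- Type T3: four (2,4)-derangements with 0 not in the 2-cycle and one (2,2,2). -/
def T3 (F : Finset (Equiv.Perm (Fin 6))) : Prop :=
  (∀ σ ∈ F, C24other σ ∨ σ.cycleType = ({2, 2, 2} : Multiset ℕ)) ∧
  {σ ∈ (F : Set (Equiv.Perm (Fin 6))) | C24other σ}.ncard = 4 ∧
  {σ ∈ (F : Set (Equiv.Perm (Fin 6))) | σ.cycleType = ({2, 2, 2} : Multiset ℕ)}.ncard = 1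

/-- Type T4: two (3,3)-derangements and three (2,2,2)-derangements. -/
def T4 (F : Finset (Equiv.Perm (Fin 6))) : Prop :=
  (∀ σ ∈ F, σ.cycleType = ({3, 3} : Multiset ℕ) ∨ σ.cycleType = ({2, 2, 2} : Multiset ℕ)) ∧
  {σ ∈ (F : Set (Equiv.Perm (Fin 6))) | σ.cycleType = ({3, 3} : Multiset ℕ)}.ncard = 2 ∧
  {σ ∈ (F : Set (Equiv.Perm (Fin 6))) | σ.cycleType = ({2, 2, 2} : Multiset ℕ)}.ncard = 3


/-!
The partition is exhibited explicitly and checked by computation. Cycle types are not computed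
directly: a derangement of six points has cycle type (2,2,2), (3,3), (2,4) or (6) according as
its order is 2, 3, 4 or 6, and the order is read off from the powers `σ ^ 2`, `σ ^ 3`, `σ ^ 4`.
The 265 listed permutations are distinct derangements and there are exactly `!6 = 265`
derangements, so the blocks cover every derangement exactly once. A block of five derangements
that realises every pair `(i, j)`, `i ≠ j`, realises each exactly once: the five values `σ i`
all lie in the five-element set of points other than `i`.
-/

open Equiv Finset

theorem Multiset.eq_of_two_le_of_sum_eq_six {s : Multiset ℕ} (h2 : ∀ a ∈ s, 2 ≤ a)
    (hs : s.sum = 6) : s = {6} ∨ s = {2, 4} ∨ s = {3, 3} ∨ s = {2, 2, 2} := by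
  have hcard : card s ≤ 3 := by have := hs ▸ card_nsmul_le_sum h2; simp at this; omega
  interval_cases hn : card s
  · simp [card_eq_zero.1 hn] at hs
  · obtain ⟨a, rfl⟩ := card_eq_one.1 hn
    simp_all
  · obtain ⟨a, b, rfl⟩ := card_eq_two.1 hn
    have := h2 a (by simp)
    have := h2 b (by simp)
    obtain ⟨rfl, rfl⟩ | ⟨rfl, rfl⟩ | ⟨rfl, rfl⟩ :
        a = 2 ∧ b = 4 ∨ a = 3 ∧ b = 3 ∨ a = 4 ∧ b = 2 := by
      simp at hs; omega
    all_goals decide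
  · obtain ⟨a, b, c, rfl⟩ := card_eq_three.1 hn
    have := h2 a (by simp)
    have := h2 b (by simp)
    have := h2 c (by simp)
    obtain ⟨rfl, rfl, rfl⟩ : a = 2 ∧ b = 2 ∧ c = 2 := by simp at hs; omega
    simp

theorem List.nodup_map_toFinset_of_nodup_flatten {β : Type*} [DecidableEq β]
    {L : List (List β)} (h : L.flatten.Nodup) (hne : ∀ l ∈ L, l ≠ []) :
    (L.map List.toFinset).Nodup := by
  refine List.pairwise_map.2 ((List.nodup_flatten.1 h).2.imp_of_mem fun {l _} hl _ hd heq => ?_)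
  obtain ⟨x, hx⟩ := List.exists_mem_of_ne_nil l (hne l hl)
  exact hd hx (List.mem_toFinset.1 (heq ▸ List.mem_toFinset.2 hx))

theorem List.pairwiseDisjoint_toFinset_of_nodup_flatten {β : Type*} [DecidableEq β]
    {L : List (List β)} (h : L.flatten.Nodup) :
    {F | F ∈ L.map List.toFinset}.PairwiseDisjoint id := by
  rintro _ hF _ hG hne
  obtain ⟨l, hl, rfl⟩ := List.mem_map.1 hF
  obtain ⟨l', hl', rfl⟩ := List.mem_map.1 hG
  have : Std.Symm (α := List β) List.Disjoint := ⟨fun _ _ => List.Disjoint.symm⟩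
  exact List.disjoint_toFinset_iff_disjoint.2
    ((List.nodup_flatten.1 h).2.forall hl hl' fun e => hne (e ▸ rfl))

namespace Finset

variable {α : Type*} {s : Finset α} {p p' q q' : α → Prop} {a b : ℕ}

theorem existsUnique_mem_of_pairwiseDisjoint [DecidableEq α] {P : Finset (Finset α)}
    {S : Finset α} (hdisj : (P : Set (Finset α)).PairwiseDisjoint id) (hsub : ∀ F ∈ P, F ⊆ S)
    (hcard : #S ≤ ∑ F ∈ P, #F) {x : α} (hx : x ∈ S) :
    ∃! F, F ∈ P ∧ x ∈ F := by
  have hunion : P.biUnion id = S :=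
    eq_of_subset_of_card_le (biUnion_subset.2 hsub) (by rwa [card_biUnion hdisj])
  obtain ⟨F, hF, hxF⟩ := mem_biUnion.1 (hunion ▸ hx)
  exact ⟨F, ⟨hF, hxF⟩, fun G ⟨hG, hxG⟩ => hdisj.elim_finset hG hF x hxG hxF⟩

theorem ncard_sep_eq_card_filter [DecidablePred p'] (h : ∀ x ∈ s, p x ↔ p' x) :
    {x ∈ (s : Set α) | p x}.ncard = #(s.filter p') := by
  rw [← Set.ncard_coe_finset, coe_filter]
  exact congrArg Set.ncard (Set.sep_ext_iff.2 h)

/-- `T1`–`T4` are all of this form. -/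
def IsComposedOf (s : Finset α) (p : α → Prop) (a : ℕ) (q : α → Prop) (b : ℕ) : Prop :=
  (∀ x ∈ s, p x ∨ q x) ∧ {x ∈ (s : Set α) | p x}.ncard = a ∧
    {x ∈ (s : Set α) | q x}.ncard = b

theorem IsComposedOf.congr (hp : ∀ x ∈ s, p x ↔ p' x) (hq : ∀ x ∈ s, q x ↔ q' x) :
    s.IsComposedOf p a q b ↔ s.IsComposedOf p' a q' b := by
  rw [IsComposedOf, IsComposedOf, Set.sep_ext_iff.2 hp, Set.sep_ext_iff.2 hq]
  exact and_congr_left' (forall₂_congr fun x hx => or_congr (hp x hx) (hq x hx))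

instance [DecidablePred p] [DecidablePred q] : Decidable (s.IsComposedOf p a q b) :=
  decidable_of_iff ((∀ x ∈ s, p x ∨ q x) ∧ #(s.filter p) = a ∧ #(s.filter q) = b) <| by
    rw [IsComposedOf, ncard_sep_eq_card_filter (fun _ _ => Iff.rfl),
      ncard_sep_eq_card_filter (fun _ _ => Iff.rfl)]

end Finset

namespace Equiv.Perm

variable {α : Type*} [Fintype α] [DecidableEq α]

theorem cycleType_of_mem_derangements (hα : Fintype.card α = 6) {σ : Perm α}
    (hσ : σ ∈ derangements α) :
    σ.cycleType = {6} ∨ σ.cycleType = {2, 4} ∨ σ.cycleType = {3, 3} ∨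
      σ.cycleType = {2, 2, 2} := by
  refine Multiset.eq_of_two_le_of_sum_eq_six (fun _ => two_le_of_mem_cycleType) ?_
  rw [sum_cycleType, eq_univ_of_forall fun x => mem_support.2 (hσ x), card_univ, hα]

def cycleTypeOfOrder (σ : Perm α) : Multiset ℕ :=
  if σ ^ 2 = 1 then {2, 2, 2}
  else if σ ^ 3 = 1 then {3, 3}
  else if σ ^ 4 = 1 then {2, 4}
  else {6}

theorem cycleType_eq_cycleTypeOfOrder (hα : Fintype.card α = 6) {σ : Perm α}
    (hσ : σ ∈ derangements α) : σ.cycleType = cycleTypeOfOrder σ := by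
  have pow_eq_one (k : ℕ) : σ ^ k = 1 ↔ σ.cycleType.lcm ∣ k := by
    rw [lcm_cycleType, orderOf_dvd_iff_pow_eq_one]
  rcases cycleType_of_mem_derangements hα hσ with h | h | h | h <;>
    simp only [cycleTypeOfOrder, pow_eq_one, h] <;> decide

theorem isComposedOf_cycleType_iff (hα : Fintype.card α = 6) {F : Finset (Perm α)} {a b : ℕ}
    (hF : ∀ σ ∈ F, σ ∈ derangements α) (Φ Ψ : Multiset ℕ → Perm α → Prop) :
    F.IsComposedOf (fun σ => Φ σ.cycleType σ) a (fun σ => Ψ σ.cycleType σ) b ↔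
      F.IsComposedOf (fun σ => Φ (cycleTypeOfOrder σ) σ) a
        (fun σ => Ψ (cycleTypeOfOrder σ) σ) b :=
  IsComposedOf.congr (fun σ hσ => by rw [cycleType_eq_cycleTypeOfOrder hα (hF σ hσ)])
    (fun σ hσ => by rw [cycleType_eq_cycleTypeOfOrder hα (hF σ hσ)])

theorem existsUnique_apply_eq_of_forall_exists {F : Finset (Perm α)}
    (hcard : #F ≤ Fintype.card α - 1) (hF : ∀ σ ∈ F, ∀ i, σ i ≠ i)
    (hcov : ∀ i j, i ≠ j → ∃ σ ∈ F, σ i = j) {i j : α} (hij : i ≠ j) :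
    ∃! σ, σ ∈ F ∧ σ i = j := by
  have hinj := inj_on_of_surj_on_of_card_le (t := univ.erase i) (fun σ _ => σ i)
    (fun σ hσ => mem_erase.2 ⟨hF σ hσ i, mem_univ _⟩)
    (fun k hk => (hcov i k (ne_of_mem_erase hk).symm).imp fun σ h => ⟨h.1, h.2⟩)
    (by rwa [card_erase_of_mem (mem_univ i), card_univ])
  obtain ⟨σ, hσ, hσij⟩ := hcov i j hij
  exact ⟨σ, ⟨hσ, hσij⟩, fun τ ⟨hτ, hτij⟩ => hinj hτ hσ (hτij.trans hσij.symm)⟩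

end Equiv.Perm

theorem card_toFinset_derangements_fin_six : #(derangements (Fin 6)).toFinset = 265 := by
  rw [Set.toFinset_card, card_derangements_eq_numDerangements, Fintype.card_fin]
  decide

section BlockTypes

open Perm

variable {F : Finset (Perm (Fin 6))}

-- `T1`–`T4` with cycle types read off from the order, so that they become decidable.
abbrev T1' (F : Finset (Perm (Fin 6))) : Prop :=
  F.IsComposedOf (fun σ => cycleTypeOfOrder σ = {2, 4} ∧ σ (σ 0) = 0) 1
    (fun σ => cycleTypeOfOrder σ = {6}) 4

abbrev T2' (F : Finset (Perm (Fin 6))) : Prop :=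
  F.IsComposedOf (fun σ => cycleTypeOfOrder σ = {2, 4} ∧ σ (σ 0) ≠ 0) 3
    (fun σ => cycleTypeOfOrder σ = {3, 3}) 2

abbrev T3' (F : Finset (Perm (Fin 6))) : Prop :=
  F.IsComposedOf (fun σ => cycleTypeOfOrder σ = {2, 4} ∧ σ (σ 0) ≠ 0) 4
    (fun σ => cycleTypeOfOrder σ = {2, 2, 2}) 1

abbrev T4' (F : Finset (Perm (Fin 6))) : Prop :=
  F.IsComposedOf (fun σ => cycleTypeOfOrder σ = {3, 3}) 2
    (fun σ => cycleTypeOfOrder σ = {2, 2, 2}) 3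

theorem T1_iff_T1' (hF : ∀ σ ∈ F, ∀ i, σ i ≠ i) : T1 F ↔ T1' F :=
  isComposedOf_cycleType_iff (Fintype.card_fin 6) hF (fun m σ => m = {2, 4} ∧ σ (σ 0) = 0)
    fun m _ => m = {6}

theorem T2_iff_T2' (hF : ∀ σ ∈ F, ∀ i, σ i ≠ i) : T2 F ↔ T2' F :=
  isComposedOf_cycleType_iff (Fintype.card_fin 6) hF (fun m σ => m = {2, 4} ∧ σ (σ 0) ≠ 0)
    fun m _ => m = {3, 3}

theorem T3_iff_T3' (hF : ∀ σ ∈ F, ∀ i, σ i ≠ i) : T3 F ↔ T3' F :=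
  isComposedOf_cycleType_iff (Fintype.card_fin 6) hF (fun m σ => m = {2, 4} ∧ σ (σ 0) ≠ 0)
    fun m _ => m = {2, 2, 2}

theorem T4_iff_T4' (hF : ∀ σ ∈ F, ∀ i, σ i ≠ i) : T4 F ↔ T4' F :=
  isComposedOf_cycleType_iff (Fintype.card_fin 6) hF (fun m _ => m = {3, 3})
    fun m _ => m = {2, 2, 2}

end BlockTypes

section Blocks

noncomputable def ofImages (f : Fin 6 → Fin 6) (hf : Function.Injective f := by decide) :
    Perm (Fin 6) :=
  Equiv.ofBijective f (Finite.injective_iff_bijective.1 hf)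

/-- Blocks of type `T1` (30 of them), then `T2` (16), `T3` (3) and `T4` (4). -/
noncomputable def partitionBlockLists : List (List (Perm (Fin 6))) :=
[
  [ofImages ![1,0,3,4,5,2], ofImages ![2,3,5,0,1,4], ofImages ![3,4,0,5,2,1],
    ofImages ![4,5,1,2,3,0], ofImages ![5,2,4,1,0,3]],
  [ofImages ![1,3,0,4,5,2], ofImages ![2,5,1,0,3,4], ofImages ![3,4,5,1,2,0],
    ofImages ![4,2,3,5,0,1], ofImages ![5,0,4,2,1,3]],
  [ofImages ![1,2,3,4,5,0], ofImages ![2,3,1,5,0,4], ofImages ![3,5,4,0,1,2],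
    ofImages ![4,0,5,1,2,3], ofImages ![5,4,0,2,3,1]],
  [ofImages ![1,2,5,4,0,3], ofImages ![2,3,0,5,1,4], ofImages ![3,0,4,2,5,1],
    ofImages ![4,5,3,1,2,0], ofImages ![5,4,1,0,3,2]],
  [ofImages ![1,2,3,5,0,4], ofImages ![2,3,1,4,5,0], ofImages ![3,4,5,0,2,1],
    ofImages ![4,5,0,2,1,3], ofImages ![5,0,4,1,3,2]],
  [ofImages ![1,5,4,0,3,2], ofImages ![2,3,5,4,0,1], ofImages ![3,2,0,5,1,4],
    ofImages ![4,0,1,2,5,3], ofImages ![5,4,3,1,2,0]],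
  [ofImages ![1,5,3,4,0,2], ofImages ![2,4,0,1,5,3], ofImages ![3,0,1,5,2,4],
    ofImages ![4,3,5,2,1,0], ofImages ![5,2,4,0,3,1]],
  [ofImages ![1,4,3,0,5,2], ofImages ![2,0,4,5,3,1], ofImages ![3,5,1,4,2,0],
    ofImages ![4,2,5,1,0,3], ofImages ![5,3,0,2,1,4]],
  [ofImages ![1,3,5,4,2,0], ofImages ![2,0,3,5,1,4], ofImages ![3,2,4,0,5,1],
    ofImages ![4,5,0,1,3,2], ofImages ![5,4,1,2,0,3]],
  [ofImages ![1,4,0,5,3,2], ofImages ![2,3,4,0,5,1], ofImages ![3,2,5,4,1,0],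
    ofImages ![4,5,1,2,0,3], ofImages ![5,0,3,1,2,4]],
  [ofImages ![1,5,0,2,3,4], ofImages ![2,4,5,1,0,3], ofImages ![3,0,4,5,1,2],
    ofImages ![4,2,3,0,5,1], ofImages ![5,3,1,4,2,0]],
  [ofImages ![1,5,3,0,2,4], ofImages ![2,0,5,4,1,3], ofImages ![3,4,1,5,0,2],
    ofImages ![4,3,0,2,5,1], ofImages ![5,2,4,1,3,0]],
  [ofImages ![1,4,5,2,3,0], ofImages ![2,0,4,1,5,3], ofImages ![3,5,1,0,2,4],
    ofImages ![4,3,0,5,1,2], ofImages ![5,2,3,4,0,1]],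
  [ofImages ![1,2,5,0,3,4], ofImages ![2,5,1,4,0,3], ofImages ![3,4,0,1,5,2],
    ofImages ![4,0,3,5,2,1], ofImages ![5,3,4,2,1,0]],
  [ofImages ![1,4,0,2,5,3], ofImages ![2,5,4,1,3,0], ofImages ![3,0,5,4,2,1],
    ofImages ![4,3,1,5,0,2], ofImages ![5,2,3,0,1,4]],
  [ofImages ![1,0,5,2,3,4], ofImages ![2,5,3,4,1,0], ofImages ![3,2,4,5,0,1],
    ofImages ![4,3,1,0,5,2], ofImages ![5,4,0,1,2,3]],
  [ofImages ![1,2,4,5,3,0], ofImages ![2,3,0,4,5,1], ofImages ![3,0,5,2,1,4],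
    ofImages ![4,5,1,0,2,3], ofImages ![5,4,3,1,0,2]],
  [ofImages ![1,4,5,0,2,3], ofImages ![2,3,4,5,1,0], ofImages ![3,2,0,4,5,1],
    ofImages ![4,5,3,1,0,2], ofImages ![5,0,1,2,3,4]],
  [ofImages ![1,0,4,2,5,3], ofImages ![2,4,3,5,0,1], ofImages ![3,5,0,4,1,2],
    ofImages ![4,2,5,1,3,0], ofImages ![5,3,1,0,2,4]],
  [ofImages ![1,0,3,5,2,4], ofImages ![2,4,5,0,3,1], ofImages ![3,5,4,2,1,0],
    ofImages ![4,2,0,1,5,3], ofImages ![5,3,1,4,0,2]],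
  [ofImages ![1,2,4,0,5,3], ofImages ![2,5,0,1,3,4], ofImages ![3,4,5,2,0,1],
    ofImages ![4,3,1,5,2,0], ofImages ![5,0,3,4,1,2]],
  [ofImages ![1,4,3,5,2,0], ofImages ![2,5,4,0,1,3], ofImages ![3,0,1,4,5,2],
    ofImages ![4,3,5,2,0,1], ofImages ![5,2,0,1,3,4]],
  [ofImages ![1,3,4,2,5,0], ofImages ![2,4,0,5,3,1], ofImages ![3,2,5,1,0,4],
    ofImages ![4,5,3,0,1,2], ofImages ![5,0,1,4,2,3]],
  [ofImages ![1,3,5,2,0,4], ofImages ![2,5,0,4,1,3], ofImages ![3,2,4,1,5,0],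
    ofImages ![4,0,1,5,3,2], ofImages ![5,4,3,0,2,1]],
  [ofImages ![1,3,0,5,2,4], ofImages ![2,0,3,4,5,1], ofImages ![3,5,4,1,0,2],
    ofImages ![4,2,5,0,1,3], ofImages ![5,4,1,2,3,0]],
  [ofImages ![1,3,4,5,0,2], ofImages ![2,4,1,0,5,3], ofImages ![3,5,0,1,2,4],
    ofImages ![4,0,5,2,3,1], ofImages ![5,2,3,4,1,0]],
  [ofImages ![1,0,4,5,3,2], ofImages ![2,5,3,1,0,4], ofImages ![3,4,1,2,5,0],
    ofImages ![4,3,5,0,2,1], ofImages ![5,2,0,4,1,3]],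
  [ofImages ![1,0,5,4,2,3], ofImages ![2,4,3,1,5,0], ofImages ![3,5,1,2,0,4],
    ofImages ![4,2,0,5,3,1], ofImages ![5,3,4,0,1,2]],
  [ofImages ![1,5,0,4,2,3], ofImages ![2,4,1,5,3,0], ofImages ![3,2,5,0,1,4],
    ofImages ![4,0,3,1,5,2], ofImages ![5,3,4,2,0,1]],
  [ofImages ![1,5,4,2,0,3], ofImages ![2,0,5,1,3,4], ofImages ![3,4,1,0,5,2],
    ofImages ![4,2,3,5,1,0], ofImages ![5,3,0,4,2,1]],
  [ofImages ![1,2,0,4,5,3], ofImages ![2,0,1,5,3,4], ofImages ![3,4,5,2,1,0],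
    ofImages ![4,5,3,0,2,1], ofImages ![5,3,4,1,0,2]],
  [ofImages ![1,2,3,0,5,4], ofImages ![2,4,5,1,3,0], ofImages ![3,5,4,2,0,1],
    ofImages ![4,0,1,5,2,3], ofImages ![5,3,0,4,1,2]],
  [ofImages ![1,2,5,4,3,0], ofImages ![2,5,4,1,0,3], ofImages ![3,0,1,2,5,4],
    ofImages ![4,3,0,5,2,1], ofImages ![5,4,3,0,1,2]],
  [ofImages ![1,2,4,5,0,3], ofImages ![2,5,3,0,1,4], ofImages ![3,4,0,2,5,1],
    ofImages ![4,3,5,1,2,0], ofImages ![5,0,1,4,3,2]],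
  [ofImages ![1,5,0,4,3,2], ofImages ![2,4,5,0,1,3], ofImages ![3,0,4,5,2,1],
    ofImages ![4,3,1,2,5,0], ofImages ![5,2,3,1,0,4]],
  [ofImages ![1,4,5,0,3,2], ofImages ![2,0,4,5,1,3], ofImages ![3,5,0,4,2,1],
    ofImages ![4,2,3,1,5,0], ofImages ![5,3,1,2,0,4]],
  [ofImages ![1,3,0,2,5,4], ofImages ![2,5,3,4,0,1], ofImages ![3,4,1,5,2,0],
    ofImages ![4,0,5,1,3,2], ofImages ![5,2,4,0,1,3]],
  [ofImages ![1,5,3,2,0,4], ofImages ![2,0,5,4,3,1], ofImages ![3,2,4,5,1,0],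
    ofImages ![4,3,0,1,5,2], ofImages ![5,4,1,0,2,3]],
  [ofImages ![1,3,4,0,5,2], ofImages ![2,4,1,5,0,3], ofImages ![3,0,5,1,2,4],
    ofImages ![4,5,3,2,1,0], ofImages ![5,2,0,4,3,1]],
  [ofImages ![1,3,5,0,2,4], ofImages ![2,4,3,5,1,0], ofImages ![3,0,4,1,5,2],
    ofImages ![4,5,0,2,3,1], ofImages ![5,2,1,4,0,3]],
  [ofImages ![1,3,4,5,2,0], ofImages ![2,0,3,1,5,4], ofImages ![3,5,1,4,0,2],
    ofImages ![4,2,5,0,3,1], ofImages ![5,4,0,2,1,3]],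
  [ofImages ![1,4,0,5,2,3], ofImages ![2,3,4,1,5,0], ofImages ![3,2,5,4,0,1],
    ofImages ![4,5,1,0,3,2], ofImages ![5,0,3,2,1,4]],
  [ofImages ![1,4,3,5,0,2], ofImages ![2,5,4,0,3,1], ofImages ![3,2,1,4,5,0],
    ofImages ![4,0,5,2,1,3], ofImages ![5,3,0,1,2,4]],
  [ofImages ![1,4,5,2,0,3], ofImages ![2,5,1,4,3,0], ofImages ![3,2,0,1,5,4],
    ofImages ![4,0,3,5,1,2], ofImages ![5,3,4,0,2,1]],
  [ofImages ![1,5,3,4,2,0], ofImages ![2,3,5,1,0,4], ofImages ![3,4,0,5,1,2],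
    ofImages ![4,2,1,0,5,3], ofImages ![5,0,4,2,3,1]],
  [ofImages ![1,5,4,2,3,0], ofImages ![2,3,1,0,5,4], ofImages ![3,4,5,1,0,2],
    ofImages ![4,2,0,5,1,3], ofImages ![5,0,3,4,2,1]],
  [ofImages ![1,3,5,4,0,2], ofImages ![2,4,0,5,1,3], ofImages ![3,5,4,1,2,0],
    ofImages ![4,0,3,2,5,1], ofImages ![5,2,1,0,3,4]],
  [ofImages ![1,4,3,2,5,0], ofImages ![2,5,0,4,3,1], ofImages ![3,2,1,5,0,4],
    ofImages ![4,3,5,0,1,2], ofImages ![5,0,4,1,2,3]],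
  [ofImages ![1,5,4,0,2,3], ofImages ![2,3,0,1,5,4], ofImages ![3,0,5,4,1,2],
    ofImages ![4,2,1,5,3,0], ofImages ![5,4,3,2,0,1]],
  [ofImages ![1,2,0,5,3,4], ofImages ![2,0,1,4,5,3], ofImages ![3,4,5,0,1,2],
    ofImages ![4,5,3,2,0,1], ofImages ![5,3,4,1,2,0]],
  [ofImages ![1,0,5,4,3,2], ofImages ![2,3,4,5,0,1], ofImages ![3,2,1,0,5,4],
    ofImages ![4,5,0,1,2,3], ofImages ![5,4,3,2,1,0]],
  [ofImages ![1,0,3,2,5,4], ofImages ![2,3,5,4,1,0], ofImages ![3,5,4,0,2,1],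
    ofImages ![4,2,1,5,0,3], ofImages ![5,4,0,1,3,2]],
  [ofImages ![1,0,4,5,2,3], ofImages ![2,4,3,0,5,1], ofImages ![3,5,0,2,1,4],
    ofImages ![4,3,5,1,0,2], ofImages ![5,2,1,4,3,0]]]

-- Without these, bounded quantifiers over permutations are decided by enumerating all of
-- `Perm (Fin 6)` or `Finset (Perm (Fin 6))`.
attribute [local instance high] Finset.decidableDforallFinset Finset.decidableDExistsFinset

theorem partitionBlockLists_flatten_nodup : partitionBlockLists.flatten.Nodup :=
  -- comparing base-6 codes is much faster in the kernel than comparing permutations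
  List.Nodup.of_map (fun σ : Perm (Fin 6) => finFunctionFinEquiv ⇑σ) (by decide +kernel)

noncomputable def partitionBlocks : Finset (Finset (Perm (Fin 6))) :=
  ⟨partitionBlockLists.map List.toFinset,
    List.nodup_map_toFinset_of_nodup_flatten partitionBlockLists_flatten_nodup
      (by decide +kernel)⟩

theorem pairwiseDisjoint_partitionBlocks :
    (partitionBlocks : Set (Finset (Perm (Fin 6)))).PairwiseDisjoint id :=
  List.pairwiseDisjoint_toFinset_of_nodup_flatten partitionBlockLists_flatten_nodup

theorem card_partitionBlocks : #partitionBlocks = 53 := rfl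

theorem card_of_mem_partitionBlocks : ∀ F ∈ partitionBlocks, #F = 5 := by decide +kernel

theorem derangement_of_mem_partitionBlocks :
    ∀ F ∈ partitionBlocks, ∀ σ ∈ F, ∀ i, σ i ≠ i := by
  decide +kernel

theorem exists_apply_eq_of_mem_partitionBlocks :
    ∀ F ∈ partitionBlocks, ∀ i j : Fin 6, i ≠ j → ∃ σ ∈ F, σ i = j := by
  decide +kernel

theorem type_of_mem_partitionBlocks :
    ∀ F ∈ partitionBlocks, T1' F ∨ T2' F ∨ T3' F ∨ T4' F := by
  decide +kernel

theorem card_filter_type_partitionBlocks :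
    #(partitionBlocks.filter T1') = 30 ∧ #(partitionBlocks.filter T2') = 16 ∧
      #(partitionBlocks.filter T3') = 3 ∧ #(partitionBlocks.filter T4') = 4 := by
  decide +kernel

end Blocks

/-- The 265 derangements of Fin 6 can be partitioned into 53
1-factorizations of L_{6,1}, of which 30 are of type T1, 16 of type T2,
3 of type T3, and 4 of type T4. -/
theorem stmt9 :
    ∃ P : Finset (Finset (Equiv.Perm (Fin 6))),
      P.card = 53 ∧
      (∀ F ∈ P, ∀ σ ∈ F, ∀ i, σ i ≠ i) ∧
      (∀ σ : Equiv.Perm (Fin 6), (∀ i, σ i ≠ i) → ∃! F, F ∈ P ∧ σ ∈ F) ∧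
      (∀ F ∈ P, ∀ i j : Fin 6, i ≠ j → ∃! σ, σ ∈ F ∧ σ i = j) ∧
      (∀ F ∈ P, T1 F ∨ T2 F ∨ T3 F ∨ T4 F) ∧
      {F | F ∈ P ∧ T1 F}.ncard = 30 ∧
      {F | F ∈ P ∧ T2 F}.ncard = 16 ∧
      {F | F ∈ P ∧ T3 F}.ncard = 3 ∧
      {F | F ∈ P ∧ T4 F}.ncard = 4 := by
  have hder := derangement_of_mem_partitionBlocks
  obtain ⟨h1, h2, h3, h4⟩ := card_filter_type_partitionBlocks
  refine ⟨partitionBlocks, card_partitionBlocks, hder, fun σ hσ => ?_, fun F hF i j hij => ?_,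
    fun F hF => ?_, (ncard_sep_eq_card_filter fun F hF => T1_iff_T1' (hder F hF)).trans h1,
    (ncard_sep_eq_card_filter fun F hF => T2_iff_T2' (hder F hF)).trans h2,
    (ncard_sep_eq_card_filter fun F hF => T3_iff_T3' (hder F hF)).trans h3,
    (ncard_sep_eq_card_filter fun F hF => T4_iff_T4' (hder F hF)).trans h4⟩
  · refine existsUnique_mem_of_pairwiseDisjoint (S := (derangements (Fin 6)).toFinset)
      pairwiseDisjoint_partitionBlocks (fun F hF σ hσ => Set.mem_toFinset.2 (hder F hF σ hσ)) ?_
      (Set.mem_toFinset.2 hσ)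
    rw [card_toFinset_derangements_fin_six, sum_congr rfl card_of_mem_partitionBlocks, sum_const,
      card_partitionBlocks, smul_eq_mul]
  · exact Perm.existsUnique_apply_eq_of_forall_exists (card_of_mem_partitionBlocks F hF).le
      (hder F hF) (exists_apply_eq_of_mem_partitionBlocks F hF) hij
  · rw [T1_iff_T1' (hder F hF), T2_iff_T2' (hder F hF), T3_iff_T3' (hder F hF),
      T4_iff_T4' (hder F hF)]
    exact type_of_mem_partitionBlocks F hF
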